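/- arXiv:1307.0292 — 2 statements merged into one kernel-verified Lean document; each statement's English description precedes it below -/
import Mathlib

section
/- The assignments 1 ↦ I₂, v₁ ↦ [[z₁,0],[0,−z₁]], v₂ ↦ [[0,z₂],[z₂,0]] extend to an injective K-algebra homomorphism ε^(2) : E^(2) → M₂(K[z₁,z₂]/(z₁²,z₂²)), and moreover tr(ε^(2)(g)) ∈ K for every g ∈ E^(2). -/
variable (K : Type*) [Field K] [CharZero K]

def TruncPoly2 : Type _ :=
  MvPolynomial (Fin 2) K ⧸
    Ideal.span {(MvPolynomial.X 0 : MvPolynomial (Fin 2) K) ^ 2, MvPolynomial.X 1 ^ 2}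

noncomputable instance : CommRing (TruncPoly2 K) := by unfold TruncPoly2; infer_instance
noncomputable instance : Algebra K (TruncPoly2 K) := by unfold TruncPoly2; infer_instance

noncomputable def zres (i : Fin 2) : TruncPoly2 K :=
  Ideal.Quotient.mk _ (MvPolynomial.X i)

/-!
With `e₀ = ι (Pi.single 0 1)` and `e₁ = ι (Pi.single 1 1)`, the universal property of the
exterior algebra gives `ε` as soon as the two matrices square to zero and anticommute. Every
element of `E⁽²⁾` is `a + b e₀ + c e₁ + d e₀e₁`, whose image is
`!![a + b z₁, c z₂ + d z₁z₂; c z₂ - d z₁z₂, a - b z₁]`: its trace is `2a`, and its first row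
vanishes only if `a = b = c = d = 0`, since `1, z₁, z₂, z₁z₂` are linearly independent.
-/

section
open MvPolynomial DualNumber

variable {K : Type*} [Field K]

theorem smul_add_smul_mul_self_eq_zero {R A : Type*} [CommSemiring R] [Semiring A] [Algebra R A]
    {a b : A} (ha : a * a = 0) (hb : b * b = 0) (hab : a * b + b * a = 0) (s t : R) :
    (s • a + t • b) * (s • a + t • b) = 0 := by
  simp only [add_mul, mul_add, smul_mul_smul_comm, ha, hb, smul_zero, zero_add, add_zero]
  rw [mul_comm t s, ← smul_add, add_comm, hab, smul_zero]

namespace ExteriorAlgebra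

theorem ι_fin_two (v : Fin 2 → K) :
    ι K v = v 0 • ι K (Pi.single 0 1) + v 1 • ι K (Pi.single 1 1) := by
  rw [← map_smul, ← map_smul, ← map_add]
  congr 1
  ext i; fin_cases i <;> simp

theorem exists_eq_fin_two (x : ExteriorAlgebra K (Fin 2 → K)) :
    ∃ a b c d : K, x = algebraMap K _ a + b • ι K (Pi.single 0 1) + c • ι K (Pi.single 1 1) +
      d • (ι K (Pi.single 0 1) * ι K (Pi.single 1 1)) := by
  set e₀ := ι K (Pi.single 0 1 : Fin 2 → K)
  set e₁ := ι K (Pi.single 1 1 : Fin 2 → K)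
  have h₀ : e₀ * e₀ = 0 := ι_sq_zero _
  have h₁ : e₁ * e₁ = 0 := ι_sq_zero _
  have h₁₀ : e₁ * e₀ = -(e₀ * e₁) := eq_neg_of_add_eq_zero_left (ι_add_mul_swap _ _)
  have h₀₀₁ : e₀ * (e₀ * e₁) = 0 := by rw [← mul_assoc, h₀, zero_mul]
  have h₁₀₁ : e₁ * (e₀ * e₁) = 0 := by
    rw [← mul_assoc, h₁₀, neg_mul, mul_assoc, h₁, mul_zero, neg_zero]
  induction x using CliffordAlgebra.left_induction with
  | algebraMap r => exact ⟨r, 0, 0, 0, by simp⟩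
  | add x y hx hy =>
    obtain ⟨a, b, c, d, rfl⟩ := hx
    obtain ⟨a', b', c', d', rfl⟩ := hy
    exact ⟨a + a', b + b', c + c', d + d', by simp only [map_add, add_smul]; abel⟩
  | ι_mul x v hx =>
    obtain ⟨a, b, c, d, rfl⟩ := hx
    refine ⟨0, a * v 0, a * v 1, v 0 * c - v 1 * b, ?_⟩
    rw [show ι K v = v 0 • e₀ + v 1 • e₁ from ι_fin_two v, Algebra.algebraMap_eq_smul_one]
    simp only [add_mul, mul_add, smul_mul_smul_comm, mul_one, h₀, h₁, h₁₀, h₀₀₁, h₁₀₁, map_zero]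
    module

end ExteriorAlgebra

theorem zres_mul_self (i : Fin 2) : zres K i * zres K i = 0 :=
  Ideal.Quotient.eq_zero_iff_mem.mpr <| by
    show X i * X i ∈ _
    rw [← sq]
    fin_cases i <;> exact Ideal.subset_span (by simp)

variable (K) in
/-- The embedding `z₁ ↦ ε`, `z₂ ↦ ε'` into the dual numbers over `K[ε']`; its four
`K`-coordinates are the coefficients of `1, z₁, z₂, z₁z₂`. -/
noncomputable def TruncPoly2.toDualNumber : TruncPoly2 K →ₐ[K] K[ε][ε] :=
  Ideal.Quotient.liftₐ _ (aeval ![(ε : K[ε][ε]), TrivSqZeroExt.inl (ε : K[ε])]) fun p hp => by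
    obtain ⟨f, g, rfl⟩ := Ideal.mem_span_pair.mp hp
    simp [sq, ← TrivSqZeroExt.inl_mul]

theorem TruncPoly2.toDualNumber_zres (i : Fin 2) :
    TruncPoly2.toDualNumber K (zres K i) = ![(ε : K[ε][ε]), TrivSqZeroExt.inl (ε : K[ε])] i :=
  aeval_X _ i

theorem eq_zero_of_algebraMap_add_smul_zres_eq_zero {a b c d : K}
    (h : algebraMap K (TruncPoly2 K) a + b • zres K 0 + c • zres K 1 +
      d • (zres K 0 * zres K 1) = 0) :
    a = 0 ∧ b = 0 ∧ c = 0 ∧ d = 0 := by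
  have h' := congrArg (TruncPoly2.toDualNumber K) h
  simp only [map_add, map_smul, map_mul, AlgHom.commutes, TruncPoly2.toDualNumber_zres,
    map_zero] at h'
  open TrivSqZeroExt in
  exact ⟨by simpa [algebraMap_eq_inl'] using congrArg (fun x => fst (fst x)) h',
    by simpa [algebraMap_eq_inl'] using congrArg (fun x => fst (snd x)) h',
    by simpa [algebraMap_eq_inl'] using congrArg (fun x => snd (fst x)) h',
    by simpa [algebraMap_eq_inl'] using congrArg (fun x => snd (snd x)) h'⟩

variable (K) in
noncomputable def grassmannGen : Fin 2 → Matrix (Fin 2) (Fin 2) (TruncPoly2 K) :=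
  ![!![zres K 0, 0; 0, -zres K 0], !![0, zres K 1; zres K 1, 0]]

theorem grassmannGen_mul_self (i : Fin 2) : grassmannGen K i * grassmannGen K i = 0 := by
  ext j k
  fin_cases i <;> fin_cases j <;> fin_cases k <;>
    simp [grassmannGen, Matrix.mul_fin_two, zres_mul_self]

theorem grassmannGen_anticomm :
    grassmannGen K 0 * grassmannGen K 1 + grassmannGen K 1 * grassmannGen K 0 = 0 := by
  ext j k
  fin_cases j <;> fin_cases k <;> simp [grassmannGen, Matrix.mul_fin_two, mul_comm]

variable (K) in
noncomputable def grassmannRep :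
    ExteriorAlgebra K (Fin 2 → K) →ₐ[K] Matrix (Fin 2) (Fin 2) (TruncPoly2 K) :=
  ExteriorAlgebra.lift K ⟨Fintype.linearCombination K (grassmannGen K), fun v => by
    simpa [Fintype.linearCombination_apply] using
      smul_add_smul_mul_self_eq_zero (grassmannGen_mul_self 0) (grassmannGen_mul_self 1)
        grassmannGen_anticomm (v 0) (v 1)⟩

theorem grassmannRep_ι_single (i : Fin 2) :
    grassmannRep K (ExteriorAlgebra.ι K (Pi.single i 1)) = grassmannGen K i := by
  simp [grassmannRep]

theorem grassmannRep_apply (a b c d : K) :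
    grassmannRep K (algebraMap K _ a + b • ExteriorAlgebra.ι K (Pi.single 0 1) +
      c • ExteriorAlgebra.ι K (Pi.single 1 1) +
      d • (ExteriorAlgebra.ι K (Pi.single 0 1) * ExteriorAlgebra.ι K (Pi.single 1 1))) =
    !![algebraMap K _ a + b • zres K 0, c • zres K 1 + d • (zres K 0 * zres K 1);
      c • zres K 1 - d • (zres K 0 * zres K 1), algebraMap K _ a - b • zres K 0] := by
  ext j k
  fin_cases j <;> fin_cases k <;>
    simp [grassmannRep_ι_single, grassmannGen, Matrix.mul_fin_two, Matrix.algebraMap_eq_diagonal,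
      ← sub_eq_add_neg]

end

/-- The assignments `v₁ ↦ [[z₁,0],[0,−z₁]]`, `v₂ ↦ [[0,z₂],[z₂,0]]` extend to an
injective `K`-algebra homomorphism `ε⁽²⁾ : E⁽²⁾ → M₂(K[z₁,z₂]/(z₁²,z₂²))` with
`tr (ε⁽²⁾ g)` a scalar from `K` for every `g`. -/
theorem stmt_3 :
    ∃ ε : ExteriorAlgebra K (Fin 2 → K) →ₐ[K] Matrix (Fin 2) (Fin 2) (TruncPoly2 K),
      Function.Injective ε ∧
      ε (ExteriorAlgebra.ι K (Pi.single 0 1)) = !![zres K 0, 0; 0, -(zres K 0)] ∧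
      ε (ExteriorAlgebra.ι K (Pi.single 1 1)) = !![0, zres K 1; zres K 1, 0] ∧
      ∀ g : ExteriorAlgebra K (Fin 2 → K),
        ∃ k : K, Matrix.trace (ε g) = algebraMap K (TruncPoly2 K) k := by
  refine ⟨grassmannRep K, ?_, grassmannRep_ι_single 0, grassmannRep_ι_single 1, fun g => ?_⟩
  · refine (injective_iff_map_eq_zero _).mpr fun x hx => ?_
    obtain ⟨a, b, c, d, rfl⟩ := ExteriorAlgebra.exists_eq_fin_two x
    rw [grassmannRep_apply] at hx
    have hrow : algebraMap K _ a + b • zres K 0 + c • zres K 1 + d • (zres K 0 * zres K 1) = 0 := by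
      simpa [add_assoc] using congrArg (fun M => M 0 0 + M 0 1) hx
    obtain ⟨rfl, rfl, rfl, rfl⟩ := eq_zero_of_algebraMap_add_smul_zres_eq_zero hrow
    simp
  · obtain ⟨a, b, c, d, rfl⟩ := ExteriorAlgebra.exists_eq_fin_two g
    refine ⟨2 * a, ?_⟩
    rw [grassmannRep_apply, Matrix.trace_fin_two_of, two_mul, map_add]
    abel
end

section
/- The assignments 1 ↦ I₂, v₁ ↦ [[0,x],[x,0]], v₂ ↦ [[y,2y],[−2y,−y]], v₃ ↦ [[−2z,−z],[z,2z]] extend to an injective K-algebra homomorphism E^(3) → M₂(K[x,y,z]/(x²,y²,z²)); moreover this embedding sends v₁v₂v₃ to 3xyz·I₂, so it is not a constant-trace representation. -/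
variable (K : Type*) [Field K] [CharZero K]

/-- The truncated polynomial algebra `K[x,y,z]/(x²,y²,z²)`. -/
def TruncPoly3 : Type _ :=
  MvPolynomial (Fin 3) K ⧸
    Ideal.span {(MvPolynomial.X 0 : MvPolynomial (Fin 3) K) ^ 2,
      MvPolynomial.X 1 ^ 2, MvPolynomial.X 2 ^ 2}

noncomputable instance : CommRing (TruncPoly3 K) := by unfold TruncPoly3; infer_instance
noncomputable instance : Algebra K (TruncPoly3 K) := by unfold TruncPoly3; infer_instance

/-- The residue classes of `x, y, z` in `K[x,y,z]/(x²,y²,z²)`. -/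
noncomputable def xres (i : Fin 3) : TruncPoly3 K :=
  Ideal.Quotient.mk _ (MvPolynomial.X i)

/-!
The generators go to `xᵢ • Pᵢ`, where `P₀, P₁, P₂` are integer matrices that pairwise anticommute
with `P₀P₁P₂ = 3`. Since the `xᵢ` commute and square to zero, the images square to zero and
anticommute, so they define an algebra map out of `E⁽³⁾`, and `v₁v₂v₃ ↦ 3xyz • 1`.
This is nonzero because `xyz ∉ (x², y², z²)` (a monomial ideal) and `char K = 0`.
That already forces injectivity: if `s` is a term of minimal degree of `a ≠ 0` in the monomial
basis, then `a * e_{sᶜ}` is a nonzero multiple of the top monomial.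
The trace `6xyz` of the image of `v₁v₂v₃` is nilpotent and nonzero, so it is not a scalar.
-/

namespace ExteriorAlgebra

open Module Set.powersetCard

section Basis

variable {R M I : Type*} [CommRing R] [AddCommGroup M] [Module R M] [LinearOrder I]
  (b : Basis I R M)

lemma basis_mul_basis_eq_zero {s t : Finset I} (h : ¬Disjoint s t) :
    b.ExteriorAlgebra s * b.ExteriorAlgebra t = 0 :=
  basis_mul_of_not_disjoint b (ofCard rfl) (ofCard rfl) h

lemma exists_basis_mul_basis_eq_units_smul {s t : Finset I} (h : Disjoint s t) :
    ∃ σ : ℤˣ, b.ExteriorAlgebra s * b.ExteriorAlgebra t = σ • b.ExteriorAlgebra (s ∪ t) := by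
  let s' : Set.powersetCard I s.card := ofCard rfl
  let t' : Set.powersetCard I t.card := ofCard rfl
  refine ⟨(permOfDisjoint (s := s') (t := t') h).sign,
    (basis_mul_of_disjoint b s' t' h).trans ?_⟩
  congr 2
  exact Finset.disjUnion_eq_union s t h

lemma exists_mul_eq_smul_basis_univ [Fintype I] {x : ExteriorAlgebra R M} (hx : x ≠ 0) :
    ∃ y, ∃ c : R, c ≠ 0 ∧ x * y = c • b.ExteriorAlgebra Finset.univ := by
  set B := b.ExteriorAlgebra
  obtain ⟨s, hs, hmin⟩ := (B.repr x).support.exists_min_image Finset.card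
    (Finsupp.support_nonempty_iff.mpr (by simpa using hx))
  obtain ⟨σ, hσ⟩ := exists_basis_mul_basis_eq_units_smul b (disjoint_compl_right (a := s))
  refine ⟨B sᶜ, (σ : ℤ) • B.repr x s, ?_, ?_⟩
  · rcases Int.units_eq_one_or σ with rfl | rfl <;> simpa using Finsupp.mem_support_iff.mp hs
  have hvanish : ∀ t ∈ (B.repr x).support, t ≠ s → B.repr x t • (B t * B sᶜ) = 0 := by
    intro t ht hts
    have hts' : ¬t ⊆ s := fun hsub => hts (Finset.eq_of_subset_of_card_le hsub (hmin t ht))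
    rw [basis_mul_basis_eq_zero b (by rwa [disjoint_compl_right_iff]), smul_zero]
  calc x * B sᶜ = ∑ t ∈ (B.repr x).support, B.repr x t • (B t * B sᶜ) := by
        conv_lhs => rw [← B.linearCombination_repr x, Finsupp.linearCombination_apply,
          Finsupp.sum, Finset.sum_mul]
        simp only [smul_mul_assoc]
    _ = B.repr x s • (B s * B sᶜ) := Finset.sum_eq_single_of_mem s hs hvanish
    _ = ((σ : ℤ) • B.repr x s) • B Finset.univ := by
        rw [hσ, Finset.union_compl, smul_comm, Units.smul_def, smul_assoc]

end Basis

theorem injective_of_map_basis_univ_ne_zero {K M I A : Type*} [Field K] [AddCommGroup M]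
    [Module K M] [LinearOrder I] [Fintype I] [Ring A] [Algebra K A] (b : Basis I K M)
    (f : ExteriorAlgebra K M →ₐ[K] A) (h : f (b.ExteriorAlgebra Finset.univ) ≠ 0) :
    Function.Injective f := by
  refine (injective_iff_map_eq_zero f).mpr fun x hx => by_contra fun hne => h ?_
  obtain ⟨y, c, hc, hxy⟩ := exists_mul_eq_smul_basis_univ b hne
  have hfxy := congrArg f hxy
  rw [map_mul, hx, zero_mul, map_smul] at hfxy
  exact (smul_eq_zero.mp hfxy.symm).resolve_left hc

lemma basis_univ_eq_ιMulti {R M : Type*} [CommRing R] [AddCommGroup M] [Module R M] {n : ℕ}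
    (b : Basis (Fin n) R M) : b.ExteriorAlgebra Finset.univ = ιMulti R n b := by
  rw [basis_apply_ofCard b (Finset.card_fin n), ιMulti_family, ofFinEmbEquiv_symm_apply]
  have hid := Finset.orderEmbOfFin_unique' (Finset.card_fin n)
    (f := RelEmbedding.refl (· ≤ ·)) fun i => Finset.mem_univ i
  simp only [val_ofCard, ← hid]
  rfl

end ExteriorAlgebra

lemma basisFun_fin_three_exteriorAlgebra_univ {R : Type*} [CommRing R] :
    (Pi.basisFun R (Fin 3)).ExteriorAlgebra Finset.univ =
      ExteriorAlgebra.ι R (Pi.single 0 1) * ExteriorAlgebra.ι R (Pi.single 1 1) *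
        ExteriorAlgebra.ι R (Pi.single 2 1) := by
  simp [ExteriorAlgebra.basis_univ_eq_ιMulti, ExteriorAlgebra.ιMulti_apply, mul_assoc,
    Matrix.vecTail]

lemma Finset.sum_mul_self_eq_zero_of_anticomm {ι A : Type*} [Ring A] (s : Finset ι) (u : ι → A)
    (hsq : ∀ i, u i * u i = 0) (hanti : ∀ i j, i ≠ j → u i * u j + u j * u i = 0) :
    (∑ i ∈ s, u i) * (∑ i ∈ s, u i) = 0 := by
  classical
  induction s using Finset.induction_on with
  | empty => simp
  | insert a s ha ih =>
    have hcross : u a * ∑ i ∈ s, u i + (∑ i ∈ s, u i) * u a = 0 := by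
      rw [Finset.mul_sum, Finset.sum_mul, ← Finset.sum_add_distrib]
      exact Finset.sum_eq_zero fun i hi => hanti a i (ne_of_mem_of_not_mem hi ha).symm
    rw [Finset.sum_insert ha, add_mul, mul_add, mul_add, hsq, ih, zero_add, add_zero]
    exact hcross

lemma ofNat_mul_ne_zero_of_charZero {K R : Type*} [Field K] [CharZero K] [Ring R] [Algebra K R]
    (n : ℕ) [n.AtLeastTwo] {a : R} (ha : a ≠ 0) : (OfNat.ofNat n : R) * a ≠ 0 := by
  rw [← map_ofNat (algebraMap K R), ← Algebra.smul_def]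
  exact smul_ne_zero (OfNat.ofNat_ne_zero n) ha

lemma ne_algebraMap_of_isNilpotent {K R : Type*} [Field K] [Ring R] [Algebra K R] {t : R}
    (ht : IsNilpotent t) (h0 : t ≠ 0) (k : K) : t ≠ algebraMap K R k := by
  rintro rfl
  have : Nontrivial R := nontrivial_of_ne _ _ h0
  obtain rfl : k = 0 := ((IsNilpotent.map_iff (algebraMap K R).injective).mp ht).eq_zero
  exact h0 (map_zero _)

def cliffordMatrix : Fin 3 → Matrix (Fin 2) (Fin 2) ℤ :=
  ![!![0, 1; 1, 0], !![1, 2; -2, -1], !![-2, -1; 1, 2]]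

lemma cliffordMatrix_anticomm : ∀ i j, i ≠ j →
    cliffordMatrix i * cliffordMatrix j + cliffordMatrix j * cliffordMatrix i = 0 := by
  decide

lemma cliffordMatrix_prod : cliffordMatrix 0 * cliffordMatrix 1 * cliffordMatrix 2 = 3 := by
  decide

open MvPolynomial

namespace TruncPoly3

variable {K : Type*} [Field K]

noncomputable def mk : MvPolynomial (Fin 3) K →+* TruncPoly3 K := Ideal.Quotient.mk _

lemma mk_eq_zero_iff {p : MvPolynomial (Fin 3) K} :
    mk p = 0 ↔ p ∈ Ideal.span {(X 0 : MvPolynomial (Fin 3) K) ^ 2, X 1 ^ 2, X 2 ^ 2} :=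
  Ideal.Quotient.eq_zero_iff_mem

end TruncPoly3

section TruncRep

variable {K : Type*} [Field K]

lemma xres_eq_mk (i : Fin 3) : xres K i = TruncPoly3.mk (X i) := rfl

lemma xres_mul_self (i : Fin 3) : xres K i * xres K i = 0 := by
  rw [xres_eq_mk, ← map_mul, TruncPoly3.mk_eq_zero_iff, ← pow_two]
  apply Ideal.subset_span
  fin_cases i <;> simp

lemma xres_mul_xres_mul_xres_ne_zero : xres K 0 * xres K 1 * xres K 2 ≠ 0 := by
  have hI : ({X 0 ^ 2, X 1 ^ 2, X 2 ^ 2} : Set (MvPolynomial (Fin 3) K)) =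
      (fun s => monomial s 1) '' {Finsupp.single 0 2, Finsupp.single 1 2, Finsupp.single 2 2} := by
    simp [Set.image_insert_eq, X_pow_eq_monomial]
  have hxyz : (X 0 * X 1 * X 2 : MvPolynomial (Fin 3) K) =
      monomial (Finsupp.single 0 1 + Finsupp.single 1 1 + Finsupp.single 2 1) 1 := by
    simp [X, monomial_mul]
  rw [xres_eq_mk, xres_eq_mk, xres_eq_mk, ← map_mul, ← map_mul, Ne,
    TruncPoly3.mk_eq_zero_iff, hI, hxyz, mem_ideal_span_monomial_image]
  simp [Finsupp.le_def, Fin.forall_fin_succ]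

noncomputable def genMatrix (i : Fin 3) : Matrix (Fin 2) (Fin 2) (TruncPoly3 K) :=
  xres K i • (Int.castRingHom (TruncPoly3 K)).mapMatrix (cliffordMatrix i)

lemma genMatrix_mul (i j : Fin 3) : genMatrix (K := K) i * genMatrix j =
    (xres K i * xres K j) • (Int.castRingHom _).mapMatrix (cliffordMatrix i * cliffordMatrix j) := by
  rw [genMatrix, genMatrix, smul_mul_smul_comm, map_mul]

lemma genMatrix_mul_self (i : Fin 3) : genMatrix (K := K) i * genMatrix i = 0 := by
  rw [genMatrix_mul, xres_mul_self, zero_smul]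

lemma genMatrix_anticomm {i j : Fin 3} (h : i ≠ j) :
    genMatrix (K := K) i * genMatrix j + genMatrix j * genMatrix i = 0 := by
  rw [genMatrix_mul, genMatrix_mul, mul_comm (xres K j), ← smul_add, ← map_add,
    cliffordMatrix_anticomm i j h, map_zero, smul_zero]

lemma genMatrix_zero : genMatrix (K := K) 0 = !![0, xres K 0; xres K 0, 0] := by
  ext i j; fin_cases i <;> fin_cases j <;> simp [genMatrix, cliffordMatrix]

lemma genMatrix_one :
    genMatrix (K := K) 1 = !![xres K 1, 2 * xres K 1; -(2 * xres K 1), -(xres K 1)] := by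
  ext i j; fin_cases i <;> fin_cases j <;> simp [genMatrix, cliffordMatrix, mul_comm]

lemma genMatrix_two :
    genMatrix (K := K) 2 = !![-(2 * xres K 2), -(xres K 2); xres K 2, 2 * xres K 2] := by
  ext i j; fin_cases i <;> fin_cases j <;> simp [genMatrix, cliffordMatrix, mul_comm]

noncomputable def genLinearMap : (Fin 3 → K) →ₗ[K] Matrix (Fin 2) (Fin 2) (TruncPoly3 K) :=
  Fintype.linearCombination K genMatrix

lemma genLinearMap_mul_self (w : Fin 3 → K) : genLinearMap w * genLinearMap w = 0 := by
  rw [genLinearMap, Fintype.linearCombination_apply]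
  refine Finset.sum_mul_self_eq_zero_of_anticomm _ _ (fun i => ?_) (fun i j h => ?_)
  · rw [smul_mul_smul_comm, genMatrix_mul_self, smul_zero]
  · rw [smul_mul_smul_comm, smul_mul_smul_comm, mul_comm (w j), ← smul_add,
      genMatrix_anticomm h, smul_zero]

noncomputable def truncRep :
    ExteriorAlgebra K (Fin 3 → K) →ₐ[K] Matrix (Fin 2) (Fin 2) (TruncPoly3 K) :=
  ExteriorAlgebra.lift K ⟨genLinearMap, genLinearMap_mul_self⟩

lemma truncRep_ι_single (i : Fin 3) :
    truncRep (ExteriorAlgebra.ι K (Pi.single i 1)) = genMatrix i := by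
  simp [truncRep, genLinearMap, ExteriorAlgebra.lift_ι_apply]

lemma truncRep_top :
    truncRep (ExteriorAlgebra.ι K (Pi.single 0 1) * ExteriorAlgebra.ι K (Pi.single 1 1) *
      ExteriorAlgebra.ι K (Pi.single 2 1)) = (3 * xres K 0 * xres K 1 * xres K 2) • 1 := by
  rw [map_mul, map_mul, truncRep_ι_single, truncRep_ι_single, truncRep_ι_single, genMatrix_mul,
    genMatrix, smul_mul_smul_comm, ← map_mul, cliffordMatrix_prod, map_ofNat]
  ext i j
  fin_cases i <;> fin_cases j <;> simp [Matrix.ofNat_apply, mul_comm, mul_assoc]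

lemma trace_truncRep_top :
    (truncRep (ExteriorAlgebra.ι K (Pi.single 0 1) * ExteriorAlgebra.ι K (Pi.single 1 1) *
      ExteriorAlgebra.ι K (Pi.single 2 1))).trace = 6 * (xres K 0 * xres K 1 * xres K 2) := by
  rw [truncRep_top]
  simp [Matrix.trace_fin_two]
  ring

variable [CharZero K]

lemma truncRep_injective : Function.Injective (truncRep (K := K)) := by
  refine ExteriorAlgebra.injective_of_map_basis_univ_ne_zero (Pi.basisFun K (Fin 3)) _ ?_
  rw [basisFun_fin_three_exteriorAlgebra_univ, truncRep_top]
  intro h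
  have h00 := congr_fun (congr_fun h 0) 0
  simp only [Matrix.smul_apply, Matrix.one_apply_eq, smul_eq_mul, mul_one,
    Matrix.zero_apply] at h00
  exact ofNat_mul_ne_zero_of_charZero (K := K) 3 xres_mul_xres_mul_xres_ne_zero
    (by simpa only [mul_assoc] using h00)

lemma not_forall_trace_truncRep_mem_range_algebraMap :
    ¬ ∀ g, ∃ k : K, (truncRep g).trace = algebraMap K (TruncPoly3 K) k := by
  intro hconst
  obtain ⟨k, hk⟩ := hconst _
  rw [trace_truncRep_top] at hk
  have hnil : IsNilpotent (6 * (xres K 0 * xres K 1 * xres K 2)) :=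
    (Commute.all _ _).isNilpotent_mul_left <| (Commute.all _ _).isNilpotent_mul_left
      ⟨2, by rw [pow_two, xres_mul_self]⟩
  exact ne_algebraMap_of_isNilpotent hnil
    (ofNat_mul_ne_zero_of_charZero (K := K) 6 xres_mul_xres_mul_xres_ne_zero) k hk

end TruncRep

/-- The assignments `v₁ ↦ [[0,x],[x,0]]`, `v₂ ↦ [[y,2y],[−2y,−y]]`,
`v₃ ↦ [[−2z,−z],[z,2z]]` extend to an injective `K`-algebra homomorphism
`E⁽³⁾ → M₂(K[x,y,z]/(x²,y²,z²))` which sends `v₁v₂v₃` to `3xyz·I₂` and hence is not a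
constant-trace representation. -/
theorem stmt_11 :
    ∃ ε : ExteriorAlgebra K (Fin 3 → K) →ₐ[K] Matrix (Fin 2) (Fin 2) (TruncPoly3 K),
      Function.Injective ε ∧
      ε (ExteriorAlgebra.ι K ((Pi.single 0 1 : Fin 3 → K))) =
        !![0, xres K 0; xres K 0, 0] ∧
      ε (ExteriorAlgebra.ι K ((Pi.single 1 1 : Fin 3 → K))) =
        !![xres K 1, 2 * xres K 1; -(2 * xres K 1), -(xres K 1)] ∧
      ε (ExteriorAlgebra.ι K ((Pi.single 2 1 : Fin 3 → K))) =
        !![-(2 * xres K 2), -(xres K 2); xres K 2, 2 * xres K 2] ∧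
      ε (ExteriorAlgebra.ι K ((Pi.single 0 1 : Fin 3 → K)) *
          ExteriorAlgebra.ι K ((Pi.single 1 1 : Fin 3 → K)) *
          ExteriorAlgebra.ι K ((Pi.single 2 1 : Fin 3 → K))) =
        (3 * xres K 0 * xres K 1 * xres K 2) • (1 : Matrix (Fin 2) (Fin 2) (TruncPoly3 K)) ∧
      ¬ (∀ g, ∃ k : K, Matrix.trace (ε g) = algebraMap K (TruncPoly3 K) k) := by
  exact ⟨truncRep, truncRep_injective, by rw [truncRep_ι_single, genMatrix_zero],
    by rw [truncRep_ι_single, genMatrix_one], by rw [truncRep_ι_single, genMatrix_two],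
    truncRep_top, not_forall_trace_truncRep_mem_range_algebraMap⟩
end
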